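/- arXiv:1909.10844 — 2 statements merged into one kernel-verified Lean document; each statement's English description precedes it below -/
import Mathlib

section
/- For all integers a ≥ 0, m ≥ 1 and r with 0 ≤ r ≤ 2^a, one has the polynomial identity B_{m·2^a − r}(t) = B_{2^a − r}(t)·B_m(t) + B_r(t)·B_{m−1}(t) in ℤ[t]. -/
open Polynomial

/-- The Stern polynomials: `B 0 = 0`, `B 1 = 1`, `B (2n) = t * B n`,
`B (2n+1) = B n + B (n+1)`. -/
noncomputable def sternPoly : ℕ → Polynomial ℤ
  | 0 => 0
  | 1 => 1
  | n + 2 =>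
    if h : (n + 2) % 2 = 0 then X * sternPoly ((n + 2) / 2)
    else sternPoly ((n + 2) / 2) + sternPoly ((n + 2) / 2 + 1)
decreasing_by all_goals omega

lemma stern_even (n : ℕ) : sternPoly (2 * n) = X * sternPoly n := by
  match n with
  | 0 => simp [sternPoly]
  | n + 1 =>
    rw [show 2 * (n + 1) = 2 * n + 2 by ring, sternPoly]
    rw [dif_pos (by omega), show (2 * n + 2) / 2 = n + 1 by omega]

lemma stern_odd (n : ℕ) : sternPoly (2 * n + 1) = sternPoly n + sternPoly (n + 1) := by
  match n with
  | 0 => simp [sternPoly]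
  | n + 1 =>
    rw [show 2 * (n + 1) + 1 = 2 * n + 1 + 2 by ring, sternPoly]
    rw [dif_neg (by omega)]
    have h1 : (2 * n + 1 + 2) / 2 = n + 1 := by omega
    rw [h1]

theorem stern_split_sub (a m r : ℕ) (hm : 1 ≤ m) (hr : r ≤ 2 ^ a) :
    sternPoly (m * 2 ^ a - r) =
      sternPoly (2 ^ a - r) * sternPoly m + sternPoly r * sternPoly (m - 1) := by
  induction a generalizing r with
  | zero =>
    interval_cases r
    · simp [sternPoly]
    · simp [sternPoly]
  | succ a ih =>
    rcases Nat.even_or_odd r with ⟨s, hs⟩ | ⟨s, hs⟩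
    · have hs' : s ≤ 2 ^ a := by rw [pow_succ] at hr; omega
      subst hs
      have hp : m * 2 ^ (a + 1) = 2 * (m * 2 ^ a) := by rw [pow_succ]; ring
      have : s ≤ m * 2 ^ a := le_trans hs' (Nat.le_mul_of_pos_left _ hm)
      have h1 : m * 2 ^ (a + 1) - (s + s) = 2 * (m * 2 ^ a - s) := by omega
      have h2 : 2 ^ (a + 1) - (s + s) = 2 * (2 ^ a - s) := by rw [pow_succ]; omega
      have h3 : s + s = 2 * s := by ring
      rw [h1, h2, h3, stern_even, stern_even, stern_even, ih s hs']
      ring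
    · have hs' : s + 1 ≤ 2 ^ a := by rw [pow_succ] at hr; omega
      subst hs
      have hms : s + 1 ≤ m * 2 ^ a := le_trans hs' (Nat.le_mul_of_pos_left _ hm)
      have hp : m * 2 ^ (a + 1) = 2 * (m * 2 ^ a) := by rw [pow_succ]; ring
      have h1 : m * 2 ^ (a + 1) - (2 * s + 1) = 2 * (m * 2 ^ a - (s + 1)) + 1 := by omega
      have h2 : 2 ^ (a + 1) - (2 * s + 1) = 2 * (2 ^ a - (s + 1)) + 1 := by
        rw [pow_succ]; omega
      have h4 : m * 2 ^ a - (s + 1) + 1 = m * 2 ^ a - s := by omega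
      have h5 : 2 ^ a - (s + 1) + 1 = 2 ^ a - s := by omega
      rw [h1, h2, stern_odd, stern_odd, stern_odd, h4, h5,
        ih (s + 1) hs', ih s (by omega)]
      ring
end

section
/- For every integer n ≥ 2, B_{2^n − 3}(t) = t·\sum_{i=0}^{n−3} t^i + \sum_{i=0}^{n−2} t^i in ℤ[t] (the first sum being empty when n = 2). -/
open Polynomial

lemma sternPoly_even (n : ℕ) (h : 1 ≤ n) : sternPoly (2 * n) = X * sternPoly n := by
  rw [show 2 * n = (2 * n - 2) + 2 by omega, sternPoly]
  rw [dif_pos (by omega)]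
  congr 1
  congr 1
  omega

lemma sternPoly_odd (n : ℕ) (h : 1 ≤ n) :
    sternPoly (2 * n + 1) = sternPoly n + sternPoly (n + 1) := by
  rw [show 2 * n + 1 = (2 * n - 1) + 2 by omega, sternPoly]
  rw [dif_neg (by omega)]
  congr 2 <;> omega

lemma sternPoly_geom (k : ℕ) : sternPoly (2 ^ k - 1) = ∑ i ∈ Finset.range k, (X : Polynomial ℤ) ^ i := by
  induction k with
  | zero => simp [sternPoly]
  | succ k ih =>
    rcases Nat.eq_zero_or_pos k with rfl | hk
    · simp [sternPoly]
    have h2 : 2 ^ (k + 1) - 1 = 2 * (2 ^ k - 1) + 1 := by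
      have : 2 ^ k ≥ 2 := Nat.one_lt_two_pow (by omega)
      omega
    have h3 : 2 ^ k - 1 + 1 = 2 ^ k := by
      have : 2 ^ k ≥ 1 := Nat.one_le_two_pow
      omega
    rw [h2, sternPoly_odd _ (by have : 2 ^ k ≥ 2 := Nat.one_lt_two_pow (by omega); omega), ih, h3]
    have hpow : ∀ m : ℕ, sternPoly (2 ^ m) = X ^ m := by
      intro m
      induction m with
      | zero => simp [sternPoly]
      | succ m ihm =>
        rw [pow_succ, mul_comm, sternPoly_even _ Nat.one_le_two_pow, ihm, pow_succ, mul_comm]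
    rw [hpow, Finset.sum_range_succ]

theorem stern_two_pow_sub_three (n : ℕ) (hn : 2 ≤ n) :
    sternPoly (2 ^ n - 3) =
      X * ∑ i ∈ Finset.range (n - 2), (X : Polynomial ℤ) ^ i
        + ∑ i ∈ Finset.range (n - 1), (X : Polynomial ℤ) ^ i := by
  rcases Nat.lt_or_ge n 3 with h | h
  · interval_cases n
    simp [sternPoly]
  · have h1 : (2:ℕ) ^ (n - 1) ≥ 4 := by
      calc (4:ℕ) = 2 ^ 2 := by norm_num
      _ ≤ 2 ^ (n - 1) := Nat.pow_le_pow_right (by norm_num) (by omega)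
    have h2 : 2 ^ n = 2 * 2 ^ (n - 1) := by
      rw [← pow_succ']
      congr 1
      omega
    have key : 2 ^ n - 3 = 2 * (2 ^ (n - 1) - 2) + 1 := by omega
    rw [key, sternPoly_odd _ (by omega)]
    have e1 : 2 ^ (n - 1) - 2 = 2 * (2 ^ (n - 2) - 1) := by
      have : 2 ^ (n - 1) = 2 * 2 ^ (n - 2) := by
        rw [← pow_succ']; congr 1; omega
      omega
    have e2 : 2 ^ (n - 1) - 2 + 1 = 2 ^ (n - 1) - 1 := by omega
    rw [e1, sternPoly_even _ (by omega), sternPoly_geom, ← e1, e2, sternPoly_geom]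
end
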